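/- arXiv:2005.08263 — 2 statements merged into one kernel-verified Lean document; each statement's English description precedes it below -/
import Mathlib

section
/- Let S_n be the graph on vertices ℓ_1,…,ℓ_n,u_1,…,u_n where {ℓ_1,…,ℓ_n} forms a clique, {u_1,…,u_n} is an independent set, and the only other edges are ℓ_i u_i for each i. For any subset C ⊆ {ℓ_1,…,ℓ_n} with |C| = k, the graph obtained from S_n by deleting the edges ℓ_i u_i for all ℓ_i ∉ C has maximum matching size exactly k + ⌊(n−k)/2⌋. -/
/-- The graph `S_n` with pendant edges restricted to a set `C` of clique vertices:
vertices are `Fin n ⊕ Fin n`, where `.inl i` are the clique vertices `ℓ_i`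
(pairwise adjacent), `.inr i` are the independent vertices `u_i`, and the
pendant edge `ℓ_i u_i` is present iff `i ∈ C`. -/
def instGraph (n : ℕ) (C : Finset (Fin n)) : SimpleGraph (Fin n ⊕ Fin n) :=
  SimpleGraph.fromRel (fun x y =>
    (∃ i j : Fin n, i ≠ j ∧ x = Sum.inl i ∧ y = Sum.inl j) ∨
    (∃ i : Fin n, i ∈ C ∧ x = Sum.inl i ∧ y = Sum.inr i))

namespace InstGraphAux

open SimpleGraph Sum

variable {n : ℕ} {C : Finset (Fin n)}

lemma adj_inl_inl {n : ℕ} {C : Finset (Fin n)} {i j : Fin n} (h : i ≠ j) :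
    (instGraph n C).Adj (inl i) (inl j) := by
  refine ⟨by simpa using h, ?_⟩
  exact Or.inl (Or.inl ⟨i, j, h, rfl, rfl⟩)

lemma adj_inl_inr {n : ℕ} {C : Finset (Fin n)} {i : Fin n} (h : i ∈ C) :
    (instGraph n C).Adj (inl i) (inr i) :=
  ⟨by simp, Or.inl (Or.inr ⟨i, h, rfl, rfl⟩)⟩

lemma adj_cases {n : ℕ} {C : Finset (Fin n)} {x y : Fin n ⊕ Fin n}
    (h : (instGraph n C).Adj x y) :
    (∃ i j : Fin n, i ≠ j ∧ x = inl i ∧ y = inl j) ∨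
    (∃ i : Fin n, i ∈ C ∧ ((x = inl i ∧ y = inr i) ∨ (x = inr i ∧ y = inl i))) := by
  obtain ⟨hne, h | h⟩ := h
  · rcases h with ⟨i, j, hij, rfl, rfl⟩ | ⟨i, hi, rfl, rfl⟩
    · exact Or.inl ⟨i, j, hij, rfl, rfl⟩
    · exact Or.inr ⟨i, hi, Or.inl ⟨rfl, rfl⟩⟩
  · rcases h with ⟨i, j, hij, rfl, rfl⟩ | ⟨i, hi, rfl, rfl⟩
    · exact Or.inl ⟨j, i, hij.symm, rfl, rfl⟩
    · exact Or.inr ⟨i, hi, Or.inr ⟨rfl, rfl⟩⟩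

lemma matching_edge_unique {V : Type*} {G : SimpleGraph V} {M : G.Subgraph}
    (h : M.IsMatching) {e₁ e₂ : Sym2 V} {x : V}
    (h1 : e₁ ∈ M.edgeSet) (h2 : e₂ ∈ M.edgeSet) (hx1 : x ∈ e₁) (hx2 : x ∈ e₂) :
    e₁ = e₂ := by
  have key : ∀ e ∈ M.edgeSet, x ∈ e → ∃ y, M.Adj x y ∧ e = s(x, y) := by
    intro e he hxe
    induction e with
    | h a b =>
      rw [SimpleGraph.Subgraph.mem_edgeSet] at he
      rw [Sym2.mem_iff] at hxe
      rcases hxe with rfl | rfl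
      · exact ⟨b, he, rfl⟩
      · exact ⟨a, he.symm, Sym2.eq_swap⟩
  obtain ⟨y₁, ha1, rfl⟩ := key _ h1 hx1
  obtain ⟨y₂, ha2, rfl⟩ := key _ h2 hx2
  obtain ⟨w, _, hw⟩ := h (M.edge_vert ha1 : x ∈ M.verts)
  rw [hw _ ha1, hw _ ha2]

lemma edge_cases {e : Sym2 (Fin n ⊕ Fin n)} (he : e ∈ (instGraph n C).edgeSet) :
    (∃ i ∈ C, e = s(inl i, inr i)) ∨ (∃ i j : Fin n, i ≠ j ∧ e = s(inl i, inl j)) := by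
  induction e with
  | h a b =>
    rw [SimpleGraph.mem_edgeSet] at he
    rcases adj_cases he with ⟨i, j, hij, rfl, rfl⟩ | ⟨i, hi, ⟨rfl, rfl⟩ | ⟨rfl, rfl⟩⟩
    · exact Or.inr ⟨i, j, hij, rfl⟩
    · exact Or.inl ⟨i, hi, rfl⟩
    · exact Or.inl ⟨i, hi, Sym2.eq_swap⟩

lemma upper_bound {k : ℕ} (hC : C.card = k) (M : (instGraph n C).Subgraph)
    (hM : M.IsMatching) : M.edgeSet.ncard ≤ k + (n - k) / 2 := by
  classical
  have hfin : M.edgeSet.Finite := Set.toFinite _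
  set E : Finset (Sym2 (Fin n ⊕ Fin n)) := hfin.toFinset with hEdef
  have hEmem : ∀ e ∈ E, e ∈ M.edgeSet := fun e he => hfin.mem_toFinset.mp he
  have hclass : ∀ e ∈ E, (∃ i ∈ C, e = s(inl i, inr i)) ∨
      (∃ i j : Fin n, i ≠ j ∧ e = s(inl i, inl j)) :=
    fun e he => edge_cases (M.edgeSet_subset (hEmem e he))
  set g : Sym2 (Fin n ⊕ Fin n) → Finset (Fin n) :=
    fun e => Finset.univ.filter (fun i => inl i ∈ e) with hgdef
  set P := E.filter (fun e => ∃ i, inr i ∈ e) with hPdef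
  set Q := E.filter (fun e => ¬ ∃ i, inr i ∈ e) with hQdef
  -- pendant / clique shapes
  have hPform : ∀ e ∈ P, ∃ i ∈ C, e = s(inl i, inr i) := by
    intro e he
    rw [hPdef, Finset.mem_filter] at he
    rcases hclass e he.1 with h | ⟨i, j, hij, rfl⟩
    · exact h
    · obtain ⟨i', hi'⟩ := he.2
      simp [Sym2.mem_iff] at hi'
  have hQform : ∀ e ∈ Q, ∃ i j : Fin n, i ≠ j ∧ e = s(inl i, inl j) := by
    intro e he
    rw [hQdef, Finset.mem_filter] at he
    rcases hclass e he.1 with ⟨i, hi, rfl⟩ | h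
    · exact absurd ⟨i, by simp⟩ he.2
    · exact h
  -- |P| ≤ k
  have hPk : P.card ≤ k := by
    have hsub : P ⊆ C.image (fun i => s(inl i, inr i)) := by
      intro e he
      obtain ⟨i, hi, rfl⟩ := hPform e he
      exact Finset.mem_image.mpr ⟨i, hi, rfl⟩
    calc P.card ≤ _ := Finset.card_le_card hsub
      _ ≤ C.card := Finset.card_image_le
      _ = k := hC
  -- card of g on each part
  have hgP : ∀ e ∈ P, (g e).card = 1 := by
    intro e he
    obtain ⟨i, _, rfl⟩ := hPform e he
    have : g s(inl i, inr i) = {i} := by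
      ext j; simp [hgdef, Sym2.mem_iff, eq_comm]
    rw [this, Finset.card_singleton]
  have hgQ : ∀ e ∈ Q, (g e).card = 2 := by
    intro e he
    obtain ⟨i, j, hij, rfl⟩ := hQform e he
    have : g s(inl i, inl j) = {i, j} := by
      ext a; simp [hgdef, Sym2.mem_iff, eq_comm]
    rw [this, Finset.card_insert_of_notMem (by simpa using hij), Finset.card_singleton]
  -- disjointness and total count
  have hdisj : ∀ e₁ ∈ E, ∀ e₂ ∈ E, e₁ ≠ e₂ → Disjoint (g e₁) (g e₂) := by
    intro e₁ h1 e₂ h2 hne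
    rw [Finset.disjoint_left]
    intro i hi1 hi2
    simp only [hgdef, Finset.mem_filter] at hi1 hi2
    exact hne (matching_edge_unique hM (hEmem _ h1) (hEmem _ h2) hi1.2 hi2.2)
  have hsum : ∑ e ∈ E, (g e).card ≤ n := by
    calc ∑ e ∈ E, (g e).card = (E.biUnion g).card := (Finset.card_biUnion hdisj).symm
      _ ≤ Finset.univ.card := Finset.card_le_univ _
      _ = n := by simp
  have hsplit : ∑ e ∈ P, (g e).card + ∑ e ∈ Q, (g e).card = ∑ e ∈ E, (g e).card :=
    Finset.sum_filter_add_sum_filter_not E _ _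
  rw [Finset.sum_congr rfl hgP, Finset.sum_congr rfl hgQ, Finset.sum_const,
    Finset.sum_const, smul_eq_mul, smul_eq_mul] at hsplit
  have hcardE : E.card = P.card + Q.card :=
    (Finset.card_filter_add_card_filter_not _).symm
  have hncard : M.edgeSet.ncard = E.card := Set.ncard_eq_toFinset_card _ hfin
  omega
lemma lower_bound {k : ℕ} (hC : C.card = k) :
    ∃ M : (instGraph n C).Subgraph, M.IsMatching ∧ M.edgeSet.ncard = k + (n - k) / 2 := by
  classical
  set m := Cᶜ.card with hmdef
  have hm : m = n - k := by rw [hmdef, Finset.card_compl, hC, Fintype.card_fin]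
  set σ : Fin m ↪o Fin n := Cᶜ.orderEmbOfFin rfl with hσ
  have hσC : ∀ t, σ t ∉ C := fun t => Finset.mem_compl.mp (Finset.orderEmbOfFin_mem _ rfl t)
  have h1 : ∀ j : Fin (m / 2), 2 * j.val < m := fun j => by have := j.isLt; omega
  have h2 : ∀ j : Fin (m / 2), 2 * j.val + 1 < m := fun j => by have := j.isLt; omega
  set a : Fin (m / 2) → Fin n := fun j => σ ⟨2 * j.val, h1 j⟩ with ha
  set b : Fin (m / 2) → Fin n := fun j => σ ⟨2 * j.val + 1, h2 j⟩ with hb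
  have hab : ∀ j j' : Fin (m / 2), a j ≠ b j' := by
    intro j j' h
    have := congrArg Fin.val (σ.injective h)
    simp only [] at this
    omega
  have hainj : ∀ j j' : Fin (m / 2), a j = a j' → j = j' := by
    intro j j' h
    have := congrArg Fin.val (σ.injective h)
    simp only [] at this
    exact Fin.ext (by omega)
  have hbinj : ∀ j j' : Fin (m / 2), b j = b j' → j = j' := by
    intro j j' h
    have := congrArg Fin.val (σ.injective h)
    simp only [] at this
    exact Fin.ext (by omega)
  have haC : ∀ j, a j ∉ C := fun j => hσC _
  have hbC : ∀ j, b j ∉ C := fun j => hσC _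
  set f : ({i // i ∈ C} ⊕ Fin (m / 2)) → (instGraph n C).Subgraph :=
    Sum.elim (fun c => (instGraph n C).subgraphOfAdj (adj_inl_inr c.2))
      (fun j => (instGraph n C).subgraphOfAdj (adj_inl_inl (hab j j))) with hf
  refine ⟨⨆ x, f x, ?_, ?_⟩
  · refine SimpleGraph.Subgraph.IsMatching.iSup (fun x => ?_) ?_
    · rcases x with c | j <;>
        simp only [hf, Sum.elim_inl, Sum.elim_inr] <;>
        exact SimpleGraph.Subgraph.IsMatching.subgraphOfAdj _
    · rintro (c | j) (c' | j') hne <;>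
        rw [Set.disjoint_left] <;>
        simp only [hf, Sum.elim_inl, Sum.elim_inr, support_subgraphOfAdj,
          Set.mem_insert_iff, Set.mem_singleton_iff] <;>
        rintro x (rfl | rfl) (h | h)
      · exact hne (congrArg Sum.inl (Subtype.ext (by injection h)))
      · exact absurd h (by simp)
      · exact absurd h (by simp)
      · exact hne (congrArg Sum.inl (Subtype.ext (by injection h)))
      · exact haC j' (by injection h with h'; exact h' ▸ c.2)
      · exact hbC j' (by injection h with h'; exact h' ▸ c.2)
      · exact absurd h (by simp)
      · exact absurd h (by simp)
      · exact haC j (by injection h with h'; exact h'.symm ▸ c'.2)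
      · exact absurd h (by simp)
      · exact hbC j (by injection h with h'; exact h'.symm ▸ c'.2)
      · exact absurd h (by simp)
      · exact hne (congrArg Sum.inr (hainj j j' (by injection h)))
      · exact hab j j' (by injection h)
      · exact (hab j' j (by injection h with h'; exact h'.symm)).elim
      · exact hne (congrArg Sum.inr (hbinj j j' (by injection h)))
  · have hedge : (⨆ x, f x).edgeSet = Set.range
        (Sum.elim (fun c : {i // i ∈ C} => s(inl (c : Fin n), inr (c : Fin n)))
          (fun j => s(inl (a j), inl (b j)))) := by
      rw [SimpleGraph.Subgraph.edgeSet_iSup, ← Set.iUnion_singleton_eq_range]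
      refine Set.iUnion_congr fun x => ?_
      rcases x with c | j <;>
        simp only [hf, Sum.elim_inl, Sum.elim_inr] <;>
        exact edgeSet_subgraphOfAdj _
    rw [hedge, ← Nat.card_coe_set_eq, Nat.card_range_of_injective, Nat.card_eq_fintype_card]
    · simp [Fintype.card_subtype, Finset.filter_univ_mem, hC, hm]
    · rintro (c | j) (c' | j') h <;>
        simp only [Sum.elim_inl, Sum.elim_inr, Sym2.eq_iff] at h <;>
        rcases h with ⟨h1, h2⟩ | ⟨h1, h2⟩
      · exact congrArg Sum.inl (Subtype.ext (by injection h1))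
      · exact absurd h1 (by simp)
      · exact absurd h2 (by simp)
      · exact absurd h2 (by simp)
      · exact absurd h2 (by simp)
      · exact absurd h1 (by simp)
      · exact congrArg Sum.inr (hainj _ _ (by injection h1))
      · exact (hab j j' (by injection h1)).elim
end InstGraphAux

theorem stmt0 (n k : ℕ) (C : Finset (Fin n)) (hC : C.card = k) :
    IsGreatest {m : ℕ | ∃ M : (instGraph n C).Subgraph,
        M.IsMatching ∧ M.edgeSet.ncard = m} (k + (n - k) / 2) := by
  constructor
  · obtain ⟨M, hM, hcard⟩ := InstGraphAux.lower_bound hC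
    exact ⟨M, hM, hcard⟩
  · rintro m ⟨M, hM, rfl⟩
    exact InstGraphAux.upper_bound hC M hM
end

section
/- Let k and n be integers with 0 ≤ k ≤ n. In the graph consisting of a clique on n vertices where exactly k specified clique vertices additionally have a private pendant neighbor, a maximum matching has size k + ⌊(n−k)/2⌋. -/
/-- A clique on `n` vertices (`.inl a`, pairwise adjacent) in which the `k`
specified clique vertices `f 0, …, f (k-1)` (with `f` injective) each have a
private pendant neighbor (`.inr j` adjacent only to `.inl (f j)`). -/
def cliquePendant (n k : ℕ) (f : Fin k → Fin n) : SimpleGraph (Fin n ⊕ Fin k) :=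
  SimpleGraph.fromRel (fun x y =>
    (∃ a b : Fin n, a ≠ b ∧ x = Sum.inl a ∧ y = Sum.inl b) ∨
    (∃ j : Fin k, x = Sum.inl (f j) ∧ y = Sum.inr j))

/-!
A matching covers exactly twice as many vertices as it has edges, and the graph has `n + k`
vertices, so no matching has more than `⌊(n + k) / 2⌋ = k + ⌊(n - k) / 2⌋` edges. The bound is
attained by the `k` pendant edges together with a perfect matching of any
`2 ⌊(n - k) / 2⌋` of the `n - k` remaining clique vertices.
-/

open Set Function

namespace SimpleGraph.Subgraph

variable {V : Type*} {G : SimpleGraph V} {M : G.Subgraph}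

theorem IsMatching.ncard_verts_eq_two_mul [Finite V] (hM : M.IsMatching) :
    M.verts.ncard = 2 * M.edgeSet.ncard := by
  classical
  have := Fintype.ofFinite V
  have hdeg (v : M.verts) : M.coe.degree v = 1 := by
    rw [M.coe_degree, degree_eq_one_iff_existsUnique_adj]
    exact hM v.2
  have hedges : M.edgeSet.ncard = M.coe.edgeFinset.card := by
    rw [← M.image_coe_edgeSet_coe,
      ncard_image_of_injective _ (Sym2.map.injective Subtype.val_injective),
      ncard_eq_toFinset_card', edgeFinset]
  rw [hedges, ← M.coe.sum_degrees_eq_twice_card_edges,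
    Finset.sum_congr rfl fun v _ => by convert hdeg v, Finset.sum_const, smul_eq_mul, mul_one,
    Finset.card_univ, ← Nat.card_eq_fintype_card, Nat.card_coe_set_eq]

theorem IsMatching.two_mul_ncard_edgeSet_le [Finite V] (hM : M.IsMatching) :
    2 * M.edgeSet.ncard ≤ Nat.card V :=
  hM.ncard_verts_eq_two_mul ▸ ncard_le_card _

end SimpleGraph.Subgraph

namespace SimpleGraph

variable {V ι : Type*} {G : SimpleGraph V}

theorem exists_isMatching_verts_eq_range_union_range {g h : ι → V} (hg : Injective g)
    (hh : Injective h) (hd : Disjoint (range g) (range h)) (hadj : ∀ i, G.Adj (g i) (h i)) :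
    ∃ M : G.Subgraph, M.verts = range g ∪ range h ∧ M.IsMatching :=
  Subgraph.IsMatching.exists_of_disjoint_sets_of_equiv hd
    ((Equiv.ofInjective g hg).symm.trans (Equiv.ofInjective h hh))
    (by rintro ⟨_, i, rfl⟩; simpa using hadj i)

theorem IsClique.exists_isMatching_ncard_verts [Finite V] {s : Set V} (hs : G.IsClique s) :
    ∃ M : G.Subgraph, M.verts ⊆ s ∧ M.IsMatching ∧ M.verts.ncard = 2 * (s.ncard / 2) := by
  obtain ⟨t, hts, ht⟩ := exists_subset_card_eq (Nat.mul_div_le s.ncard 2)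
  obtain ⟨M, rfl, hM⟩ :=
    ((hs.subset hts).even_iff_exists_isMatching (toFinite t)).1 (ht ▸ even_two_mul _)
  exact ⟨M, hts, hM, ht⟩

end SimpleGraph

section cliquePendant

variable {n k : ℕ} {f : Fin k → Fin n}

theorem cliquePendant_adj_inl_inl {a b : Fin n} :
    (cliquePendant n k f).Adj (.inl a) (.inl b) ↔ a ≠ b := by
  simp [cliquePendant, SimpleGraph.fromRel_adj, eq_comm]

theorem cliquePendant_adj_inl_inr (j : Fin k) :
    (cliquePendant n k f).Adj (.inl (f j)) (.inr j) := by
  simp [cliquePendant, SimpleGraph.fromRel_adj]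

theorem isClique_cliquePendant_range_inl : (cliquePendant n k f).IsClique (range Sum.inl) := by
  rintro _ ⟨a, rfl⟩ _ ⟨b, rfl⟩ hab
  exact cliquePendant_adj_inl_inl.2 fun h => hab (congrArg _ h)

theorem exists_isMatching_cliquePendant (hf : Injective f) :
    ∃ M : (cliquePendant n k f).Subgraph,
      M.IsMatching ∧ M.verts.ncard = 2 * k + 2 * ((n - k) / 2) := by
  have hfree : (Sum.inl '' (range f)ᶜ : Set (Fin n ⊕ Fin k)).ncard = n - k := by
    rw [ncard_image_of_injective _ Sum.inl_injective, ncard_compl, ncard_range_of_injective hf]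
    simp
  obtain ⟨Mc, hMc_verts, hMc, hMc_card⟩ :=
    (isClique_cliquePendant_range_inl.subset (image_subset_range _ _)).exists_isMatching_ncard_verts
  have hpend : Disjoint (range (Sum.inl ∘ f)) (range (Sum.inr : Fin k → Fin n ⊕ Fin k)) :=
    isCompl_range_inl_range_inr.disjoint.mono_left (range_comp_subset_range _ _)
  obtain ⟨Mp, hMp_verts, hMp⟩ := SimpleGraph.exists_isMatching_verts_eq_range_union_range
    (Sum.inl_injective.comp hf) Sum.inr_injective hpend cliquePendant_adj_inl_inr
  have hdisj : Disjoint Mp.verts Mc.verts := by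
    rw [hMp_verts]
    refine (Disjoint.union_left ?_ ?_).mono_right hMc_verts
    · rw [range_comp, disjoint_image_iff Sum.inl_injective]
      exact disjoint_compl_right
    · exact isCompl_range_inl_range_inr.disjoint.symm.mono_right (image_subset_range _ _)
  refine ⟨Mp ⊔ Mc, hMp.sup hMc (by rwa [hMp.support_eq_verts, hMc.support_eq_verts]), ?_⟩
  rw [SimpleGraph.Subgraph.verts_sup, ncard_union_eq hdisj, hMp_verts, ncard_union_eq hpend,
    ncard_range_of_injective (Sum.inl_injective.comp hf),
    ncard_range_of_injective Sum.inr_injective, hMc_card, hfree, Nat.card_fin]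
  ring

end cliquePendant

/-- A maximum matching of this graph has size `k + ⌊(n−k)/2⌋`. -/
theorem stmt16 (n k : ℕ) (hkn : k ≤ n) (f : Fin k → Fin n)
    (hf : Function.Injective f) :
    IsGreatest {m : ℕ | ∃ M : (cliquePendant n k f).Subgraph,
        M.IsMatching ∧ M.edgeSet.ncard = m} (k + (n - k) / 2) := by
  constructor
  · obtain ⟨M, hM, hcard⟩ := exists_isMatching_cliquePendant hf
    exact ⟨M, hM, by rw [hM.ncard_verts_eq_two_mul] at hcard; omega⟩
  · rintro m ⟨M, hM, rfl⟩
    have := hM.two_mul_ncard_edgeSet_le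
    simp only [Nat.card_sum, Nat.card_fin] at this
    omega
end
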